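/- arXiv:2302.07705 — 3 statements merged into one kernel-verified Lean document; each statement's English description precedes it below -/
import Mathlib

section
/- Let m be an integer and let z ∈ ℂ with Im z < 0. Then the function s ↦ e^{i m (z+s)}/(z+s)² is integrable on ℝ, and ∫_{−∞}^{∞} e^{i m (z+s)}/(z+s)² ds = −2πm if m > 0, and = 0 if m ≤ 0. -/
/-!
Instead of residues we use Fourier inversion. For `Im z < 0` the function
`rampCexp z ξ = -4π² ξ₊ e^{-2πizξ}` is continuous and integrable, and since
`∫₀^∞ ξ e^{-aξ} dξ = a⁻²` for `Re a > 0`, its Fourier transform is `x ↦ (z + x)⁻²`.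
The line integral of `e^{ict}/t²` equals `e^{icz}` times the inverse Fourier transform of
`(z + x)⁻²` at `c / 2π`, i.e. `e^{icz} · rampCexp z (c / 2π) = -2π c₊`.
-/

open MeasureTheory Filter Set FourierTransform Topology
open scoped Real Complex

section LaplaceTransformOfId

variable {a : ℂ}

lemma norm_ofReal_pow_mul_cexp_neg_mul (n : ℕ) (t : ℝ) :
    ‖(t : ℂ) ^ n * cexp (-(a * t))‖ = |t| ^ n * rexp (-(a.re * t)) := by
  simp [Complex.norm_exp]

lemma tendsto_ofReal_pow_mul_cexp_neg_mul_atTop (ha : 0 < a.re) (n : ℕ) :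
    Tendsto (fun t : ℝ => (t : ℂ) ^ n * cexp (-(a * t))) atTop (𝓝 0) := by
  rw [tendsto_zero_iff_norm_tendsto_zero]
  refine (tendsto_rpow_mul_exp_neg_mul_atTop_nhds_zero n a.re ha).congr' ?_
  filter_upwards [eventually_ge_atTop 0] with t ht
  rw [norm_ofReal_pow_mul_cexp_neg_mul, abs_of_nonneg ht, Real.rpow_natCast, neg_mul]

lemma integrableOn_Ioi_ofReal_mul_cexp_neg_mul (ha : 0 < a.re) :
    IntegrableOn (fun t : ℝ => (t : ℂ) * cexp (-(a * t))) (Ioi 0) := by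
  have hreal : IntegrableOn (fun t : ℝ => t ^ (1 : ℝ) * rexp (-a.re * t ^ (1 : ℝ))) (Ioi 0) :=
    integrableOn_rpow_mul_exp_neg_mul_rpow (by norm_num) one_pos ha
  refine hreal.mono' (by fun_prop) ?_
  filter_upwards [ae_restrict_mem measurableSet_Ioi] with t (ht : 0 < t)
  simpa [abs_of_pos ht] using (norm_ofReal_pow_mul_cexp_neg_mul (a := a) 1 t).le

lemma integral_Ioi_ofReal_mul_cexp_neg_mul (ha : 0 < a.re) :
    ∫ t in Ioi (0 : ℝ), (t : ℂ) * cexp (-(a * t)) = (a ^ 2)⁻¹ := by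
  have ha0 : a ≠ 0 := fun h => by simp [h] at ha
  let F : ℝ → ℂ := fun t => -(a⁻¹ * t + (a ^ 2)⁻¹) * cexp (-(a * t))
  have hderiv (t : ℝ) : HasDerivAt F ((t : ℂ) * cexp (-(a * t))) t := by
    have hlin : HasDerivAt (fun w : ℂ => -(a⁻¹ * w + (a ^ 2)⁻¹)) (-a⁻¹) t := by
      simpa only [mul_one] using
        (((hasDerivAt_id' (t : ℂ)).const_mul a⁻¹).add_const (a ^ 2)⁻¹).fun_neg
    have hexp : HasDerivAt (fun w : ℂ => cexp (-(a * w))) (cexp (-(a * t)) * -a) t := by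
      simpa using (((hasDerivAt_id (t : ℂ)).const_mul a).neg).cexp
    convert (hlin.mul hexp).comp_ofReal using 1
    · rfl
    field_simp
    ring
  have hlim : Tendsto F atTop (𝓝 0) := by
    have h := ((tendsto_ofReal_pow_mul_cexp_neg_mul_atTop ha 1).const_mul a⁻¹).add
      ((tendsto_ofReal_pow_mul_cexp_neg_mul_atTop ha 0).const_mul (a ^ 2)⁻¹) |>.neg
    simp only [mul_zero, add_zero, neg_zero] at h
    refine h.congr fun t => ?_
    simp only [F]
    ring
  rw [integral_Ioi_of_hasDerivAt_of_tendsto' (fun t _ => hderiv t)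
    (integrableOn_Ioi_ofReal_mul_cexp_neg_mul ha) hlim]
  simp [F]

end LaplaceTransformOfId

section FourierPair

noncomputable def rampCexp (z : ℂ) (ξ : ℝ) : ℂ :=
  -4 * (π : ℂ) ^ 2 * (max ξ 0 : ℝ) * cexp (-(2 * π * Complex.I * z * ξ))

variable {z : ℂ}

lemma continuous_rampCexp (z : ℂ) : Continuous (rampCexp z) := by
  unfold rampCexp
  fun_prop

lemma rampCexp_eq_indicator (z : ℂ) :
    rampCexp z = (Ioi 0).indicator fun ξ : ℝ =>
      -4 * (π : ℂ) ^ 2 * ((ξ : ℂ) * cexp (-(2 * π * Complex.I * z * ξ))) := by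
  ext ξ
  rcases le_or_gt ξ 0 with hξ | hξ
  · simp [rampCexp, hξ]
  · simp [rampCexp, hξ, hξ.le, mul_assoc]

lemma cexp_smul_rampCexp (z : ℂ) (x ξ : ℝ) :
    cexp (↑(-2 * π * ξ * x) * Complex.I) • rampCexp z ξ = rampCexp (z + x) ξ := by
  rw [smul_eq_mul, rampCexp, rampCexp, mul_left_comm, ← Complex.exp_add]
  congr 2
  push_cast
  ring

lemma re_two_pi_I_mul_pos (hz : z.im < 0) : 0 < (2 * π * Complex.I * z).re := by
  simpa [Complex.mul_re] using mul_pos_of_neg_of_neg (by linarith [Real.pi_pos] : -(2 * π) < 0) hz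

lemma integrable_rampCexp (hz : z.im < 0) : Integrable (rampCexp z) := by
  rw [rampCexp_eq_indicator, integrable_indicator_iff measurableSet_Ioi]
  exact (integrableOn_Ioi_ofReal_mul_cexp_neg_mul (re_two_pi_I_mul_pos hz)).const_mul _

lemma integral_rampCexp (hz : z.im < 0) : ∫ ξ, rampCexp z ξ = (z ^ 2)⁻¹ := by
  rw [rampCexp_eq_indicator, integral_indicator measurableSet_Ioi, integral_const_mul,
    integral_Ioi_ofReal_mul_cexp_neg_mul (re_two_pi_I_mul_pos hz),
    show (2 * π * Complex.I * z) ^ 2 = -4 * π ^ 2 * z ^ 2 by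
      linear_combination 4 * π ^ 2 * z ^ 2 * Complex.I_sq]
  have hπ : (π : ℂ) ≠ 0 := by exact_mod_cast Real.pi_ne_zero
  field_simp

lemma fourier_rampCexp (hz : z.im < 0) : 𝓕 (rampCexp z) = fun x : ℝ => ((z + x) ^ 2)⁻¹ := by
  ext x
  simp_rw [Real.fourier_real_eq_integral_exp_smul, cexp_smul_rampCexp]
  exact integral_rampCexp (by simpa using hz)

lemma add_ofReal_ne_zero (hz : z.im ≠ 0) (x : ℝ) : z + x ≠ 0 := by
  intro h
  exact hz (by simpa using congrArg Complex.im h)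

lemma integrable_inv_add_ofReal_sq (hz : z.im ≠ 0) :
    Integrable fun x : ℝ => ((z + x) ^ 2)⁻¹ := by
  have hg : Integrable fun x : ℝ => (z.im ^ 2)⁻¹ * (1 + ((x + z.re) / z.im) ^ 2)⁻¹ :=
    ((integrable_inv_one_add_sq.comp_div hz).comp_add_right z.re).const_mul _
  refine hg.mono' ?_ (Eventually.of_forall fun x => le_of_eq ?_)
  · exact (Continuous.inv₀ (by fun_prop) fun x => pow_ne_zero 2 (add_ofReal_ne_zero hz x))
      |>.aestronglyMeasurable
  · rw [norm_inv, norm_pow, Complex.sq_norm, Complex.normSq_apply, ← mul_inv]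
    simp only [Complex.add_re, Complex.ofReal_re, Complex.add_im, Complex.ofReal_im, add_zero]
    field_simp
    ring

lemma fourierInv_inv_add_ofReal_sq (hz : z.im < 0) :
    𝓕⁻ (fun x : ℝ => ((z + x) ^ 2)⁻¹) = rampCexp z := by
  rw [← fourier_rampCexp hz]
  exact (continuous_rampCexp z).fourierInv_fourier_eq (integrable_rampCexp hz)
    (fourier_rampCexp hz ▸ integrable_inv_add_ofReal_sq hz.ne)

end FourierPair

section LineIntegral

variable {z : ℂ}

lemma integrable_cexp_mul_div_sq (c : ℝ) (hz : z.im ≠ 0) :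
    Integrable fun s : ℝ => cexp (Complex.I * c * (z + s)) / (z + s) ^ 2 := by
  have hbound (s : ℝ) : ‖cexp (Complex.I * c * (z + s))‖ ≤ rexp (-(c * z.im)) := by
    simp [Complex.norm_exp, Complex.mul_re]
  simpa only [div_eq_mul_inv] using
    (integrable_inv_add_ofReal_sq hz).bdd_mul (by fun_prop) (Eventually.of_forall hbound)

lemma integral_cexp_mul_div_sq (c : ℝ) (hz : z.im < 0) :
    ∫ s : ℝ, cexp (Complex.I * c * (z + s)) / (z + s) ^ 2 = -2 * π * max c 0 := by
  have hπ : (π : ℂ) ≠ 0 := by exact_mod_cast Real.pi_ne_zero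
  set w := c / (2 * π) with hw
  have hfreq : 2 * π * Complex.I * z * w = Complex.I * c * z := by
    rw [hw]
    push_cast
    field_simp
  have hmax : max w 0 = max c 0 / (2 * π) := by
    rw [hw, ← max_div_div_right (by positivity), zero_div]
  have hsplit (s : ℝ) : cexp (Complex.I * c * (z + s)) / (z + s) ^ 2 = cexp (Complex.I * c * z) *
      (cexp (↑(2 * π * inner ℝ s w) * Complex.I) • ((z + s) ^ 2)⁻¹) := by
    rw [smul_eq_mul, div_eq_mul_inv, ← mul_assoc, ← Complex.exp_add, Real.inner_apply, hw]
    congr 2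
    push_cast
    field_simp
  rw [integral_congr_ae (Eventually.of_forall hsplit), integral_const_mul, ← Real.fourierInv_eq',
    fourierInv_inv_add_ofReal_sq hz, rampCexp, hfreq, mul_comm, mul_assoc, ← Complex.exp_add,
    neg_add_cancel, Complex.exp_zero, mul_one, hmax]
  push_cast
  field_simp
  ring

end LineIntegral

/-- For `m ∈ ℤ` and `z` in the lower half-plane, the integral of `e^{im(z+s)}/(z+s)²`
along the horizontal line through `z` equals `-2πm` for `m > 0` and `0` for `m ≤ 0`. -/
theorem stmt_2 (m : ℤ) (z : ℂ) (hz : z.im < 0) :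
    Integrable (fun s : ℝ => Complex.exp (Complex.I * m * (z + s)) / (z + s) ^ 2) ∧
    ∫ s : ℝ, Complex.exp (Complex.I * m * (z + s)) / (z + s) ^ 2
      = if 0 < m then -2 * (Real.pi : ℂ) * (m : ℂ) else 0 := by
  have hcast : ((m : ℝ) : ℂ) = m := Complex.ofReal_intCast m
  refine ⟨hcast ▸ integrable_cexp_mul_div_sq m hz.ne, ?_⟩
  rw [← hcast, integral_cexp_mul_div_sq m hz]
  split_ifs with hm
  · rw [max_eq_left (by exact_mod_cast hm.le)]
  · rw [max_eq_right (by exact_mod_cast not_lt.mp hm)]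
    simp
end

section
/- Let (g_k)_{k∈ℤ} be complex numbers with g₀ = 0 and |g_k| ≤ C·e^{−σ|k|} for some constants C, σ > 0. Fix ε > 0 and τ ∈ ℝ. Then the series g(τ + r/ε) = Σ_{k∈ℤ} g_k e^{ik(τ + r/ε)} converges for every r, the function r ↦ (2 sinh r/cosh³ r)·g(τ + r/ε) is integrable on ℝ, and −∫_{−∞}^{∞} (2 sinh r/cosh³ r)·g(τ + r/ε) dr = −i(π/ε²)·Σ_{k∈ℤ, k≠0} g_k · e^{ikτ} · k² / sinh(kπ/(2ε)). -/
/-!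
The Fourier transform of `φ(r) = 2 sinh r / cosh³ r` is computed by the substitution
`x = sigmoid (2r) = 1 / (1 + e^{-2r})`, which maps `ℝ` onto `(0, 1)` with `dx = 2x(1 - x) dr`,
`2 sinh r / cosh³ r = 2x(1 - x) · 4(2x - 1)` and `e^{iar} = x^z (1 - x)^{-z}` for `z = ia/2`.
This turns `∫ φ(r) e^{iar} dr` into `8 B(z + 2, 1 - z) - 4 B(z + 1, 1 - z) = 4z² Γ(z) Γ(1 - z)`,
and Euler's reflection formula gives `iπa² / sinh(πa/2)`. The coefficients `g_k` are summable,
so the Melnikov integral may be computed term by term with `a = k/ε`.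
-/

open MeasureTheory Set
open scoped Real

namespace Real

lemma hasDerivAt_sigmoid_two_mul (r : ℝ) :
    HasDerivAt (fun r => sigmoid (2 * r)) (2 * sigmoid (2 * r) * (1 - sigmoid (2 * r))) r :=
  ((hasDerivAt_sigmoid (2 * r)).comp r ((hasDerivAt_id r).const_mul 2)).congr_deriv (by ring)

lemma image_sigmoid_two_mul : (fun r => sigmoid (2 * r)) '' univ = Ioo 0 1 := by
  rw [image_univ, ← range_sigmoid]
  exact (mul_left_surjective₀ two_ne_zero).range_comp sigmoid

lemma injective_sigmoid_two_mul : Function.Injective fun r => sigmoid (2 * r) :=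
  sigmoid_injective.comp (mul_right_injective₀ two_ne_zero)

lemma abs_two_mul_sigmoid_mul_one_sub (t : ℝ) :
    |2 * sigmoid t * (1 - sigmoid t)| = 2 * sigmoid t * (1 - sigmoid t) :=
  abs_of_pos (mul_pos (mul_pos two_pos (sigmoid_pos t)) (sub_pos.mpr (sigmoid_lt_one t)))

section Substitution

variable {E : Type*} [NormedAddCommGroup E] [NormedSpace ℝ E]

lemma integrableOn_Ioo_iff_integrable_sigmoid_two_mul (G : ℝ → E) :
    IntegrableOn G (Ioo 0 1) ↔ Integrable fun r =>
      (2 * sigmoid (2 * r) * (1 - sigmoid (2 * r))) • G (sigmoid (2 * r)) := by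
  rw [← image_sigmoid_two_mul, integrableOn_image_iff_integrableOn_abs_deriv_smul
    MeasurableSet.univ (fun r _ => (hasDerivAt_sigmoid_two_mul r).hasDerivWithinAt)
    injective_sigmoid_two_mul.injOn, integrableOn_univ]
  simp only [abs_two_mul_sigmoid_mul_one_sub]

lemma integral_Ioo_eq_integral_sigmoid_two_mul (G : ℝ → E) :
    ∫ x in Ioo 0 1, G x =
      ∫ r, (2 * sigmoid (2 * r) * (1 - sigmoid (2 * r))) • G (sigmoid (2 * r)) := by
  rw [← image_sigmoid_two_mul, integral_image_eq_integral_abs_deriv_smul MeasurableSet.univ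
    (fun r _ => (hasDerivAt_sigmoid_two_mul r).hasDerivWithinAt) injective_sigmoid_two_mul.injOn,
    Measure.restrict_univ]
  simp only [abs_two_mul_sigmoid_mul_one_sub]

end Substitution

lemma two_mul_sinh_div_cosh_pow_three_eq_sigmoid (r : ℝ) :
    2 * sinh r / cosh r ^ 3 =
      2 * sigmoid (2 * r) * (1 - sigmoid (2 * r)) * (4 * (2 * sigmoid (2 * r) - 1)) := by
  rw [sigmoid_def, sinh_eq, cosh_eq, show -(2 * r) = -r + -r by ring, exp_add, exp_neg]
  have := exp_pos r
  field_simp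
  ring

lemma sigmoid_cpow_mul_one_sub_cpow_neg (t : ℝ) (z : ℂ) :
    (sigmoid t : ℂ) ^ z * (1 - (sigmoid t : ℂ)) ^ (-z) = Complex.exp (z * t) := by
  have hσ := sigmoid_pos t
  have h1 : 1 - (sigmoid t : ℂ) = (sigmoid t : ℂ) * (exp (-t) : ℝ) := by
    rw [← Complex.ofReal_one, ← Complex.ofReal_sub, ← sigmoid_neg, ← sigmoid_mul_rexp_neg]
    push_cast
    ring
  rw [h1, Complex.mul_cpow_ofReal_nonneg hσ.le (exp_pos _).le, ← mul_assoc,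
    ← Complex.cpow_add _ _ (by exact_mod_cast hσ.ne'), add_neg_cancel, Complex.cpow_zero, one_mul,
    Complex.cpow_def_of_ne_zero (by exact_mod_cast (exp_pos _).ne'),
    ← Complex.ofReal_log (exp_pos _).le, log_exp]
  push_cast
  ring_nf

lemma integrable_two_mul_sinh_div_cosh_pow_three :
    Integrable fun r : ℝ => 2 * sinh r / cosh r ^ 3 := by
  have := (integrableOn_Ioo_iff_integrable_sigmoid_two_mul (fun x : ℝ => 4 * (2 * x - 1))).mp
    ((Continuous.integrableOn_Icc (by fun_prop)).mono_set Ioo_subset_Icc_self)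
  simp_rw [two_mul_sinh_div_cosh_pow_three_eq_sigmoid]
  exact this

lemma integral_two_mul_sinh_div_cosh_pow_three : ∫ r : ℝ, 2 * sinh r / cosh r ^ 3 = 0 := by
  have h := integral_neg_eq_self (fun r : ℝ => 2 * sinh r / cosh r ^ 3) volume
  simp only [sinh_neg, cosh_neg, mul_neg, neg_div, integral_neg] at h
  linarith

end Real

namespace Complex

lemma betaIntegral_eq_integral_Ioo (u v : ℂ) :
    betaIntegral u v = ∫ x in Ioo (0 : ℝ) 1, (x : ℂ) ^ (u - 1) * (1 - (x : ℂ)) ^ (v - 1) := by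
  rw [betaIntegral, intervalIntegral.integral_of_le zero_le_one, integral_Ioc_eq_integral_Ioo]

lemma integrableOn_Ioo_betaIntegrand {u v : ℂ} (hu : 0 < u.re) (hv : 0 < v.re) :
    IntegrableOn (fun x : ℝ => (x : ℂ) ^ (u - 1) * (1 - (x : ℂ)) ^ (v - 1)) (Ioo 0 1) :=
  ((intervalIntegrable_iff_integrableOn_Ioc_of_le zero_le_one).mp
    (betaIntegral_convergent hu hv)).mono_set Ioo_subset_Ioc_self

lemma integral_Ioo_mul_cpow_mul_one_sub_cpow_neg {z : ℂ} (hz : z ≠ 0) (h₀ : -1 < z.re)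
    (h₁ : z.re < 1) :
    ∫ x in Ioo (0 : ℝ) 1, (4 * (2 * x - 1) : ℂ) * ((x : ℂ) ^ z * (1 - (x : ℂ)) ^ (-z))
      = 4 * z ^ 2 * π / sin (π * z) := by
  have hz1 : 0 < (z + 1).re := by rw [add_re, one_re]; linarith
  have hz2 : 0 < (z + 2).re := by rw [add_re, re_ofNat]; linarith
  have hz' : 0 < (1 - z).re := by rw [sub_re, one_re]; linarith
  have hsplit : ∀ x ∈ Ioo (0 : ℝ) 1,
      (4 * (2 * x - 1) : ℂ) * ((x : ℂ) ^ z * (1 - (x : ℂ)) ^ (-z))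
        = 8 * ((x : ℂ) ^ (z + 2 - 1) * (1 - (x : ℂ)) ^ (1 - z - 1))
          - 4 * ((x : ℂ) ^ (z + 1 - 1) * (1 - (x : ℂ)) ^ (1 - z - 1)) := by
    intro x hx
    have hx0 : (x : ℂ) ≠ 0 := by exact_mod_cast hx.1.ne'
    rw [show z + 2 - 1 = z + 1 by ring, show z + 1 - 1 = z by ring, show 1 - z - 1 = -z by ring,
      cpow_add _ _ hx0, cpow_one]
    ring
  have hB : 8 * betaIntegral (z + 2) (1 - z) - 4 * betaIntegral (z + 1) (1 - z)
      = 4 * z ^ 2 * (Gamma z * Gamma (1 - z)) := by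
    have hΓ1 : Gamma (z + 1) = z * Gamma z := Gamma_add_one z hz
    have hΓ2 : Gamma (z + 2) = (z + 1) * (z * Gamma z) := by
      rw [show z + 2 = z + 1 + 1 by ring, Gamma_add_one _ (fun h => by simp [h] at hz1), hΓ1]
    rw [betaIntegral_eq_Gamma_mul_div _ _ hz2 hz', betaIntegral_eq_Gamma_mul_div _ _ hz1 hz',
      show z + 2 + (1 - z) = 1 + 1 + 1 by ring, show z + 1 + (1 - z) = 1 + 1 by ring,
      Gamma_add_one _ (by norm_num), Gamma_add_one _ one_ne_zero, Gamma_one, hΓ1, hΓ2]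
    ring
  rw [setIntegral_congr_fun measurableSet_Ioo hsplit, integral_sub, integral_const_mul,
    integral_const_mul, ← betaIntegral_eq_integral_Ioo, ← betaIntegral_eq_integral_Ioo, hB,
    Gamma_mul_Gamma_one_sub, mul_div_assoc]
  · exact (integrableOn_Ioo_betaIntegrand hz2 hz').const_mul 8
  · exact (integrableOn_Ioo_betaIntegrand hz1 hz').const_mul 4

end Complex

open Complex in
theorem integral_two_mul_sinh_div_cosh_pow_three_mul_exp (a : ℝ) :
    ∫ r : ℝ, ((2 * Real.sinh r / Real.cosh r ^ 3 : ℝ) : ℂ) * exp (I * a * r)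
      = I * π * a ^ 2 / (Real.sinh (π * a / 2) : ℂ) := by
  rcases eq_or_ne a 0 with rfl | ha
  · -- the right-hand side is `0 / 0 = 0`, which is also the limit as `a → 0`
    simp only [ofReal_zero, mul_zero, zero_mul, exp_zero, mul_one]
    rw [integral_complex_ofReal, Real.integral_two_mul_sinh_div_cosh_pow_three]
    simp
  set z : ℂ := I * a / 2 with hz
  have hpt : ∀ r : ℝ, ((2 * Real.sinh r / Real.cosh r ^ 3 : ℝ) : ℂ) * exp (I * a * r)
      = (2 * Real.sigmoid (2 * r) * (1 - Real.sigmoid (2 * r))) •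
          ((4 * (2 * Real.sigmoid (2 * r) - 1) : ℂ) *
            ((Real.sigmoid (2 * r) : ℂ) ^ z * (1 - (Real.sigmoid (2 * r) : ℂ)) ^ (-z))) := by
    intro r
    rw [Real.sigmoid_cpow_mul_one_sub_cpow_neg, Real.two_mul_sinh_div_cosh_pow_three_eq_sigmoid,
      hz, real_smul]
    push_cast
    ring_nf
  rw [integral_congr_ae (ae_of_all _ hpt), ← Real.integral_Ioo_eq_integral_sigmoid_two_mul
      (fun x : ℝ => (4 * (2 * x - 1) : ℂ) * ((x : ℂ) ^ z * (1 - (x : ℂ)) ^ (-z))),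
    integral_Ioo_mul_cpow_mul_one_sub_cpow_neg (by simp [hz, ha]) (by simp [hz]) (by simp [hz]),
    show (π : ℂ) * z = (π * a / 2 : ℝ) * I by push_cast; ring, sin_mul_I, ← ofReal_sinh,
    hz, mul_comm _ I, ← div_div]
  congr 1
  rw [div_eq_iff I_ne_zero]
  ring

lemma summable_exp_neg_mul_abs {σ : ℝ} (hσ : 0 < σ) :
    Summable fun k : ℤ => Real.exp (-σ * |(k : ℝ)|) := by
  have h : Summable fun n : ℕ => Real.exp (n * -σ) :=
    Real.summable_exp_nat_mul_iff.mpr (neg_neg_of_pos hσ)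
  refine .of_nat_of_neg (h.congr fun n => ?_) (h.congr fun n => ?_) <;> simp [mul_comm]

section TermwiseIntegration

variable {α ι 𝕜 : Type*} [MeasurableSpace α] {μ : Measure α} [RCLike 𝕜]
  {φ : α → 𝕜} {f : ι → α → 𝕜} {b : ι → ℝ}

lemma integrable_mul_tsum [TopologicalSpace α] [OpensMeasurableSpace α] (hφ : Integrable φ μ)
    (hf : ∀ k, Continuous (f k)) (hb : Summable b) (hfb : ∀ k x, ‖f k x‖ ≤ b k) :
    Integrable (fun x => φ x * ∑' k, f k x) μ :=
  hφ.mul_bdd (continuous_tsum hf hb hfb).aestronglyMeasurable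
    (ae_of_all _ fun x => tsum_of_norm_bounded hb.hasSum (hfb · x))

lemma integral_mul_tsum [Countable ι] (hφ : Integrable φ μ)
    (hf : ∀ k, AEStronglyMeasurable (f k) μ) (hb : Summable b) (hfb : ∀ k x, ‖f k x‖ ≤ b k) :
    ∫ x, φ x * ∑' k, f k x ∂μ = ∑' k, ∫ x, φ x * f k x ∂μ := by
  have hint : ∀ k, Integrable (fun x => φ x * f k x) μ := fun k =>
    hφ.mul_bdd (hf k) (ae_of_all _ (hfb k))
  have hbound : ∀ k x, ‖φ x * f k x‖ ≤ ‖φ x‖ * b k := fun k x =>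
    (norm_mul_le _ _).trans (mul_le_mul_of_nonneg_left (hfb k x) (norm_nonneg _))
  simp_rw [← tsum_mul_left]
  refine (integral_tsum_of_summable_integral_norm hint ?_).symm
  refine (hb.mul_left (∫ x, ‖φ x‖ ∂μ)).of_nonneg_of_le
    (fun k => integral_nonneg fun x => norm_nonneg _) fun k => ?_
  rw [← integral_mul_const]
  exact integral_mono (hint k).norm (hφ.norm.mul_const _) (hbound k)

end TermwiseIntegration

theorem stmt_6_general (g : ℤ → ℂ) (C σ : ℝ) (hσ : 0 < σ)
    (hdecay : ∀ k : ℤ, ‖g k‖ ≤ C * Real.exp (-σ * |(k : ℝ)|))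
    (ε : ℝ) (τ : ℝ) :
    (∀ r : ℝ, Summable (fun k : ℤ =>
        g k * Complex.exp (Complex.I * (k : ℂ) * ((τ + r / ε : ℝ) : ℂ)))) ∧
    Integrable (fun r : ℝ =>
      ((2 * Real.sinh r / (Real.cosh r) ^ 3 : ℝ) : ℂ) *
        ∑' k : ℤ, g k * Complex.exp (Complex.I * (k : ℂ) * ((τ + r / ε : ℝ) : ℂ))) ∧
    -∫ r : ℝ, ((2 * Real.sinh r / (Real.cosh r) ^ 3 : ℝ) : ℂ) *
        ∑' k : ℤ, g k * Complex.exp (Complex.I * (k : ℂ) * ((τ + r / ε : ℝ) : ℂ))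
      = -Complex.I * ((Real.pi / ε ^ 2 : ℝ) : ℂ) *
          ∑' k : ℤ, g k * Complex.exp (Complex.I * (k : ℂ) * (τ : ℂ)) * (k : ℂ) ^ 2 /
            ((Real.sinh ((k : ℝ) * Real.pi / (2 * ε)) : ℝ) : ℂ) := by
  set φ : ℝ → ℂ := fun r => ((2 * Real.sinh r / Real.cosh r ^ 3 : ℝ) : ℂ)
  set f : ℤ → ℝ → ℂ := fun k r => g k * Complex.exp (Complex.I * k * ((τ + r / ε : ℝ) : ℂ))
    with hf_def
  have hb : Summable fun k : ℤ => C * Real.exp (-σ * |(k : ℝ)|) :=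
    (summable_exp_neg_mul_abs hσ).mul_left C
  have hfb : ∀ k r, ‖f k r‖ ≤ C * Real.exp (-σ * |(k : ℝ)|) := fun k r => by
    simpa [hf_def, Complex.norm_exp] using hdecay k
  have hf : ∀ k, Continuous (f k) := fun k => by fun_prop
  have hφ : Integrable φ := Real.integrable_two_mul_sinh_div_cosh_pow_three.ofReal
  refine ⟨fun r => .of_norm_bounded hb (hfb · r), integrable_mul_tsum hφ hf hb hfb, ?_⟩
  rw [integral_mul_tsum hφ (fun k => (hf k).aestronglyMeasurable) hb hfb, ← tsum_mul_left,
    ← tsum_neg]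
  congr 1 with k
  have hsplit : ∀ r : ℝ, φ r * f k r = g k * Complex.exp (Complex.I * k * τ) *
      (φ r * Complex.exp (Complex.I * ((k / ε : ℝ) : ℂ) * r)) := fun r => by
    simp only [hf_def]
    rw [show Complex.I * k * ((τ + r / ε : ℝ) : ℂ)
      = Complex.I * k * τ + Complex.I * ((k / ε : ℝ) : ℂ) * r by push_cast; ring,
      Complex.exp_add]
    ring
  rw [integral_congr_ae (ae_of_all _ hsplit), integral_const_mul,
    integral_two_mul_sinh_div_cosh_pow_three_mul_exp,
    show π * (k / ε) / 2 = k * π / (2 * ε) by ring]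
  push_cast
  ring

/-- The Melnikov integral `-∫ (2 sinh r/cosh³ r) g(τ + r/ε) dr` for
`g(θ) = Σ_k g_k e^{ikθ}` with zero mean and exponentially decaying coefficients equals
`-i(π/ε²) Σ_{k≠0} g_k e^{ikτ} k²/sinh(kπ/(2ε))`. -/
theorem stmt_6 (g : ℤ → ℂ) (C σ : ℝ) (hC : 0 < C) (hσ : 0 < σ)
    (hg0 : g 0 = 0) (hdecay : ∀ k : ℤ, ‖g k‖ ≤ C * Real.exp (-σ * |(k : ℝ)|))
    (ε : ℝ) (hε : 0 < ε) (τ : ℝ) :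
    (∀ r : ℝ, Summable (fun k : ℤ =>
        g k * Complex.exp (Complex.I * (k : ℂ) * ((τ + r / ε : ℝ) : ℂ)))) ∧
    Integrable (fun r : ℝ =>
      ((2 * Real.sinh r / (Real.cosh r) ^ 3 : ℝ) : ℂ) *
        ∑' k : ℤ, g k * Complex.exp (Complex.I * (k : ℂ) * ((τ + r / ε : ℝ) : ℂ))) ∧
    -∫ r : ℝ, ((2 * Real.sinh r / (Real.cosh r) ^ 3 : ℝ) : ℂ) *
        ∑' k : ℤ, g k * Complex.exp (Complex.I * (k : ℂ) * ((τ + r / ε : ℝ) : ℂ))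
      = -Complex.I * ((Real.pi / ε ^ 2 : ℝ) : ℂ) *
          ∑' k : ℤ, g k * Complex.exp (Complex.I * (k : ℂ) * (τ : ℂ)) * (k : ℂ) ^ 2 /
            ((Real.sinh ((k : ℝ) * Real.pi / (2 * ε)) : ℝ) : ℂ) :=
  stmt_6_general g C σ hσ hdecay ε τ
end

section
/- Let (g_k)_{k∈ℤ} be complex numbers with g₀ = 0, g_{−k} = conj(g_k) for all k, and |g_k| ≤ C·e^{−σ|k|} for some constants C, σ > 0. Define M(τ; ε) = −i(π/ε²)·Σ_{k∈ℤ, k≠0} g_k · e^{ikτ} · k² / sinh(kπ/(2ε)). Then there exist ε₀ > 0 and C′ > 0 (depending only on C and σ) such that for all ε ∈ (0, ε₀) and all τ ∈ ℝ, |M(τ; ε) − (4π/ε²)·e^{−π/(2ε)}·Im(g₁ e^{iτ})| ≤ C′·ε^{−2}·e^{−π/ε}. -/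
/-! The terms `k = ±1` pair up, by the reality condition, to `2i Im(g₁ e^{iτ}) / sinh x` with
`x = π/(2ε)`, and `1 / sinh x = 2 e^{-x} + e^{-2x} / sinh x` splits this into the main term and an
`O(e^{-2x})` remainder. For `|k| ≥ 2` we have `1 / sinh (|k| x) ≤ 3 e^{-|k| x} ≤ 3 e^{-2x}`, and the
exponential decay of `g_k` makes `∑ k² |g_k|` converge, so the other terms contribute `O(e^{-2x})`
as well; `e^{-2x} = e^{-π/ε}`. -/

open Real
open Complex (I I_sq)

lemma Real.inv_sinh_le_three_mul_exp_neg {x : ℝ} (hx : 1 ≤ x) : (sinh x)⁻¹ ≤ 3 * exp (-x) := by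
  have h3 : 3 * exp (-x) ≤ exp x :=
    calc 3 * exp (-x) ≤ exp (2 * x) * exp (-x) := by gcongr; linarith [add_one_le_exp (2 * x)]
      _ = exp x := by rw [← exp_add]; ring_nf
  have hsinh : exp x / 3 ≤ sinh x := by rw [sinh_eq]; linarith
  calc (sinh x)⁻¹ ≤ (exp x / 3)⁻¹ := inv_anti₀ (by positivity) hsinh
    _ = 3 * exp (-x) := by rw [inv_div, exp_neg, div_eq_mul_inv]

lemma Real.inv_sinh_sub_two_mul_exp_neg {x : ℝ} (hx : x ≠ 0) :
    (sinh x)⁻¹ - 2 * exp (-x) = exp (-(2 * x)) / sinh x := by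
  have hs : sinh x ≠ 0 := by simpa using hx
  rw [eq_div_iff hs, sub_mul, inv_mul_cancel₀ hs, sinh_eq, show -(2 * x) = -x + -x by ring, exp_add]
  have : exp (-x) * exp x = 1 := by rw [← exp_add]; simp
  linear_combination -this

noncomputable def decayWeight (σ : ℝ) (k : ℤ) : ℝ := (k : ℝ) ^ 2 * exp (-σ * |(k : ℝ)|)

lemma decayWeight_nonneg (σ : ℝ) (k : ℤ) : 0 ≤ decayWeight σ k := by
  unfold decayWeight; positivity

lemma summable_decayWeight {σ : ℝ} (hσ : 0 < σ) : Summable (decayWeight σ) := by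
  have hr : ‖exp (-σ)‖ < 1 := by
    rw [norm_of_nonneg (exp_pos _).le, exp_lt_one_iff]; linarith
  have hnat : Summable fun n : ℕ => decayWeight σ n := by
    refine (summable_pow_mul_geometric_of_norm_lt_one 2 hr).congr fun n => ?_
    simp [decayWeight, ← exp_nat_mul, mul_comm]
  exact hnat.of_nat_of_neg (hnat.congr fun n => by simp [decayWeight])

/-- The `k`-th term of the Melnikov series, with `x` standing for `π / (2ε)`. -/
noncomputable def melnikovTerm (g : ℤ → ℂ) (x τ : ℝ) (k : ℤ) : ℂ :=
  g k * Complex.exp (I * k * τ) * (k : ℂ) ^ 2 / (sinh (k * x) : ℂ)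

section
variable {g : ℤ → ℂ} {C σ x : ℝ}

lemma nonneg_of_forall_norm_le_mul_exp (hdecay : ∀ k : ℤ, ‖g k‖ ≤ C * exp (-σ * |(k : ℝ)|)) :
    0 ≤ C := by
  simpa using (norm_nonneg _).trans (hdecay 0)

lemma norm_melnikovTerm (τ : ℝ) (hx : 0 ≤ x) (k : ℤ) :
    ‖melnikovTerm g x τ k‖ = ‖g k‖ * (k : ℝ) ^ 2 / sinh (|(k : ℝ)| * x) := by
  have hexp : ‖Complex.exp (I * k * τ)‖ = 1 := by
    rw [Complex.norm_exp]; simp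
  rw [melnikovTerm, norm_div, norm_mul, norm_mul, hexp, norm_pow, Complex.norm_intCast, sq_abs,
    Complex.norm_real, norm_eq_abs, abs_sinh, abs_mul, abs_of_nonneg hx, mul_one]

lemma norm_melnikovTerm_le (hdecay : ∀ k : ℤ, ‖g k‖ ≤ C * exp (-σ * |(k : ℝ)|)) (τ : ℝ)
    (hx : 1 ≤ x) (k : ℤ) :
    ‖melnikovTerm g x τ k‖ ≤ 3 * C * decayWeight σ k * exp (-(|(k : ℝ)| * x)) := by
  rw [norm_melnikovTerm τ (by linarith)]
  rcases eq_or_ne k 0 with rfl | hk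
  · simp [decayWeight]
  have hkx : 1 ≤ |(k : ℝ)| * x := by
    have : (1 : ℝ) ≤ |(k : ℝ)| := by exact_mod_cast Int.one_le_abs hk
    nlinarith
  calc ‖g k‖ * (k : ℝ) ^ 2 / sinh (|(k : ℝ)| * x)
      = ‖g k‖ * (sinh (|(k : ℝ)| * x))⁻¹ * (k : ℝ) ^ 2 := by ring
    _ ≤ C * exp (-σ * |(k : ℝ)|) * (3 * exp (-(|(k : ℝ)| * x))) * (k : ℝ) ^ 2 := by
        gcongr
        · exact (norm_nonneg _).trans (hdecay k)
        · exact hdecay k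
        · exact inv_sinh_le_three_mul_exp_neg hkx
    _ = 3 * C * decayWeight σ k * exp (-(|(k : ℝ)| * x)) := by unfold decayWeight; ring

lemma summable_melnikovTerm (hσ : 0 < σ) (hdecay : ∀ k : ℤ, ‖g k‖ ≤ C * exp (-σ * |(k : ℝ)|))
    (τ : ℝ) (hx : 1 ≤ x) : Summable (melnikovTerm g x τ) := by
  have hC := nonneg_of_forall_norm_le_mul_exp hdecay
  refine ((summable_decayWeight hσ).mul_left (3 * C)).of_norm_bounded fun k => ?_
  refine (norm_melnikovTerm_le hdecay τ hx k).trans (mul_le_of_le_one_right ?_ ?_)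
  · have := decayWeight_nonneg σ k; positivity
  · rw [exp_le_one_iff]; have := abs_nonneg (k : ℝ); nlinarith

lemma melnikovTerm_zero (τ : ℝ) : melnikovTerm g x τ 0 = 0 := by
  simp [melnikovTerm]

lemma melnikovTerm_neg_one_add_melnikovTerm_one (hreal : ∀ k : ℤ, g (-k) = starRingEnd ℂ (g k))
    (τ : ℝ) : melnikovTerm g x τ (-1) + melnikovTerm g x τ 1 =
      ((2 * (g 1 * Complex.exp (I * τ)).im : ℝ) : ℂ) * I / (sinh x : ℂ) := by
  rw [← Complex.sub_conj, map_mul, ← Complex.exp_conj, ← hreal]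
  simp only [melnikovTerm, Int.reduceNeg, Int.cast_neg, Int.cast_one, mul_neg, mul_one, neg_mul,
    even_two, Even.neg_pow, one_pow, one_mul, sinh_neg, Complex.ofReal_neg, Complex.ofReal_sinh,
    map_mul, Complex.conj_I, Complex.conj_ofReal]
  ring

lemma norm_tsum_compl_melnikovTerm_le (hσ : 0 < σ)
    (hdecay : ∀ k : ℤ, ‖g k‖ ≤ C * exp (-σ * |(k : ℝ)|)) (τ : ℝ) (hx : 1 ≤ x) :
    ‖∑' k : ↥(({-1, 0, 1} : Finset ℤ) : Set ℤ)ᶜ, melnikovTerm g x τ k‖ ≤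
      3 * C * exp (-(2 * x)) * ∑' k, decayWeight σ k := by
  have hC := nonneg_of_forall_norm_le_mul_exp hdecay
  set b : ℤ → ℝ := fun k => 3 * C * exp (-(2 * x)) * decayWeight σ k
  have hb : Summable b := (summable_decayWeight hσ).mul_left _
  have hb0 : ∀ k, 0 ≤ b k := fun k => by have := decayWeight_nonneg σ k; positivity
  have hbound : ∀ k : ↥(({-1, 0, 1} : Finset ℤ) : Set ℤ)ᶜ, ‖melnikovTerm g x τ k‖ ≤ b k := by
    rintro ⟨k, hk⟩
    have h2 : (2 : ℝ) ≤ |(k : ℝ)| := by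
      simp only [Set.mem_compl_iff, Finset.coe_insert, Finset.coe_singleton, Set.mem_insert_iff,
        Set.mem_singleton_iff, not_or] at hk
      rw [← Int.cast_abs]
      exact_mod_cast show (2 : ℤ) ≤ |k| by rcases abs_cases k with ⟨h, _⟩ | ⟨h, _⟩ <;> omega
    calc ‖melnikovTerm g x τ k‖ ≤ 3 * C * decayWeight σ k * exp (-(|(k : ℝ)| * x)) :=
          norm_melnikovTerm_le hdecay τ hx k
      _ ≤ 3 * C * decayWeight σ k * exp (-(2 * x)) := by
          have := decayWeight_nonneg σ k
          gcongr
      _ = b k := by ring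
  calc _ ≤ ∑' k : ↥(({-1, 0, 1} : Finset ℤ) : Set ℤ)ᶜ, b k :=
        tsum_of_norm_bounded (hb.subtype _).hasSum hbound
    _ ≤ ∑' k, b k := hb.tsum_subtype_le _ _ hb0
    _ = _ := tsum_mul_left

lemma norm_neg_I_mul_tsum_melnikovTerm_sub_le (hσ : 0 < σ)
    (hreal : ∀ k : ℤ, g (-k) = starRingEnd ℂ (g k))
    (hdecay : ∀ k : ℤ, ‖g k‖ ≤ C * exp (-σ * |(k : ℝ)|)) (τ : ℝ) (hx : 1 ≤ x) :
    ‖-I * ∑' k, melnikovTerm g x τ k -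
        ((4 * exp (-x) * (g 1 * Complex.exp (I * τ)).im : ℝ) : ℂ)‖ ≤
      3 * C * (2 + ∑' k, decayWeight σ k) * exp (-(2 * x)) := by
  set z := g 1 * Complex.exp (I * τ)
  have hsplit : ∑' k, melnikovTerm g x τ k = ((2 * z.im : ℝ) : ℂ) * I / (sinh x : ℂ) +
      ∑' k : ↥(({-1, 0, 1} : Finset ℤ) : Set ℤ)ᶜ, melnikovTerm g x τ k := by
    rw [← (summable_melnikovTerm hσ hdecay τ hx).sum_add_tsum_compl (s := {-1, 0, 1}),
      ← melnikovTerm_neg_one_add_melnikovTerm_one hreal]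
    simp [melnikovTerm_zero]
  set T := ∑' k : ↥(({-1, 0, 1} : Finset ℤ) : Set ℤ)ᶜ, melnikovTerm g x τ k
  have hdiff : -I * ∑' k, melnikovTerm g x τ k - ((4 * exp (-x) * z.im : ℝ) : ℂ) =
      ((2 * z.im * (exp (-(2 * x)) / sinh x) : ℝ) : ℂ) + -I * T := by
    rw [hsplit, ← inv_sinh_sub_two_mul_exp_neg (by linarith)]
    simp only [Complex.ofReal_mul, Complex.ofReal_sub, Complex.ofReal_inv, Complex.ofReal_ofNat]
    linear_combination (-2 * z.im / sinh x : ℂ) * I_sq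
  have hC := nonneg_of_forall_norm_le_mul_exp hdecay
  have hz : |z.im| ≤ C :=
    calc |z.im| ≤ ‖z‖ := Complex.abs_im_le_norm z
      _ = ‖g 1‖ := by simp [z, Complex.norm_exp]
      _ ≤ C * exp (-σ * |((1 : ℤ) : ℝ)|) := hdecay 1
      _ ≤ C := mul_le_of_le_one_right hC <| by
          rw [Int.cast_one, abs_one, mul_one, exp_le_one_iff]; linarith
  have hfirst : |2 * z.im * (exp (-(2 * x)) / sinh x)| ≤ 2 * C * (3 * exp (-(2 * x))) := by
    have hs : 0 < sinh x := sinh_pos_iff.mpr (by linarith)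
    have hquot : exp (-(2 * x)) / sinh x ≤ 3 * exp (-(2 * x)) :=
      calc exp (-(2 * x)) / sinh x = exp (-(2 * x)) * (sinh x)⁻¹ := div_eq_mul_inv _ _
        _ ≤ exp (-(2 * x)) * (3 * exp (-x)) := by gcongr; exact inv_sinh_le_three_mul_exp_neg hx
        _ ≤ exp (-(2 * x)) * (3 * 1) := by gcongr; exact exp_le_one_iff.mpr (by linarith)
        _ = 3 * exp (-(2 * x)) := by ring
    rw [abs_mul, abs_mul, abs_two, abs_of_pos (by positivity : 0 < exp (-(2 * x)) / sinh x)]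
    gcongr
  calc _ = ‖((2 * z.im * (exp (-(2 * x)) / sinh x) : ℝ) : ℂ) + -I * T‖ := by rw [hdiff]
    _ ≤ |2 * z.im * (exp (-(2 * x)) / sinh x)| + ‖T‖ :=
        (norm_add_le _ _).trans_eq (by
          rw [Complex.norm_real, norm_eq_abs, norm_mul, norm_neg, Complex.norm_I, one_mul])
    _ ≤ 2 * C * (3 * exp (-(2 * x))) + 3 * C * exp (-(2 * x)) * ∑' k, decayWeight σ k :=
        add_le_add hfirst (norm_tsum_compl_melnikovTerm_le hσ hdecay τ hx)
    _ = _ := by ring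

theorem stmt_7_general (g : ℤ → ℂ) (C σ : ℝ) (hσ : 0 < σ)
    (hreal : ∀ k : ℤ, g (-k) = starRingEnd ℂ (g k))
    (hdecay : ∀ k : ℤ, ‖g k‖ ≤ C * Real.exp (-σ * |(k : ℝ)|))
    (M : ℝ → ℝ → ℂ)
    (hM : ∀ τ ε : ℝ, M τ ε = -Complex.I * ((Real.pi / ε ^ 2 : ℝ) : ℂ) *
        ∑' k : ℤ, g k * Complex.exp (Complex.I * (k : ℂ) * (τ : ℂ)) * (k : ℂ) ^ 2 /
          ((Real.sinh ((k : ℝ) * Real.pi / (2 * ε)) : ℝ) : ℂ)) :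
    ∃ ε₀ > (0 : ℝ), ∃ C' > (0 : ℝ), ∀ ε ∈ Set.Ioo (0 : ℝ) ε₀, ∀ τ : ℝ,
      ‖M τ ε - (((4 * Real.pi / ε ^ 2) * Real.exp (-Real.pi / (2 * ε)) *
          (g 1 * Complex.exp (Complex.I * (τ : ℂ))).im : ℝ) : ℂ)‖
        ≤ C' * ε⁻¹ ^ 2 * Real.exp (-Real.pi / ε) := by
  have hC : 0 ≤ C := nonneg_of_forall_norm_le_mul_exp hdecay
  set S := ∑' k, decayWeight σ k
  have hS : 0 ≤ S := tsum_nonneg (decayWeight_nonneg σ)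
  refine ⟨π / 2, by positivity, 3 * π * (C + 1) * (2 + S), by positivity, ?_⟩
  rintro ε ⟨hε, hεπ⟩ τ
  set x := π / (2 * ε)
  have hx : 1 ≤ x := by rw [le_div_iff₀ (by positivity)]; linarith
  have hMx : M τ ε = ((π / ε ^ 2 : ℝ) : ℂ) * (-I * ∑' k, melnikovTerm g x τ k) := by
    simp only [hM, melnikovTerm, x, mul_div_assoc (_ : ℝ) π]
    ring
  have hdiff :
      M τ ε - ((4 * π / ε ^ 2 * exp (-π / (2 * ε)) * (g 1 * Complex.exp (I * τ)).im : ℝ) : ℂ) =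
        ((π / ε ^ 2 : ℝ) : ℂ) * (-I * ∑' k, melnikovTerm g x τ k -
          ((4 * exp (-x) * (g 1 * Complex.exp (I * τ)).im : ℝ) : ℂ)) := by
    rw [hMx, neg_div]
    push_cast [x]
    ring
  have hexp : exp (-π / ε) = exp (-(2 * x)) := by
    rw [show 2 * x = π / ε by simp only [x]; field_simp, neg_div]
  rw [hdiff, norm_mul, Complex.norm_real, norm_of_nonneg (by positivity), hexp]
  calc π / ε ^ 2 * ‖-I * ∑' k, melnikovTerm g x τ k -
          ((4 * exp (-x) * (g 1 * Complex.exp (I * τ)).im : ℝ) : ℂ)‖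
      ≤ π / ε ^ 2 * (3 * C * (2 + S) * exp (-(2 * x))) := by
        gcongr
        exact norm_neg_I_mul_tsum_melnikovTerm_sub_le hσ hreal hdecay τ hx
    _ = 3 * π * C * (2 + S) * ε⁻¹ ^ 2 * exp (-(2 * x)) := by ring
    _ ≤ 3 * π * (C + 1) * (2 + S) * ε⁻¹ ^ 2 * exp (-(2 * x)) := by gcongr; linarith

/-- The Melnikov function `M(τ;ε)` of the rapidly forced pendulum is dominated by its first
harmonic: `M(τ;ε) = (4π/ε²) e^{-π/(2ε)} Im(g₁ e^{iτ}) + O(ε^{-2} e^{-π/ε})`. -/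
theorem stmt_7 (g : ℤ → ℂ) (C σ : ℝ) (hC : 0 < C) (hσ : 0 < σ)
    (hg0 : g 0 = 0) (hreal : ∀ k : ℤ, g (-k) = starRingEnd ℂ (g k))
    (hdecay : ∀ k : ℤ, ‖g k‖ ≤ C * Real.exp (-σ * |(k : ℝ)|))
    (M : ℝ → ℝ → ℂ)
    (hM : ∀ τ ε : ℝ, M τ ε = -Complex.I * ((Real.pi / ε ^ 2 : ℝ) : ℂ) *
        ∑' k : ℤ, g k * Complex.exp (Complex.I * (k : ℂ) * (τ : ℂ)) * (k : ℂ) ^ 2 /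
          ((Real.sinh ((k : ℝ) * Real.pi / (2 * ε)) : ℝ) : ℂ)) :
    ∃ ε₀ > (0 : ℝ), ∃ C' > (0 : ℝ), ∀ ε ∈ Set.Ioo (0 : ℝ) ε₀, ∀ τ : ℝ,
      ‖M τ ε - (((4 * Real.pi / ε ^ 2) * Real.exp (-Real.pi / (2 * ε)) *
          (g 1 * Complex.exp (Complex.I * (τ : ℂ))).im : ℝ) : ℂ)‖
        ≤ C' * ε⁻¹ ^ 2 * Real.exp (-Real.pi / ε) :=
  stmt_7_general g C σ hσ hreal hdecay M hM
end
end
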